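/- In the local-coordinate Lorentzian setting, assume u is a unit timelike vector field on U, and let S be a smooth scalar field on U such that ∂_k S + u_k Ṡ = 0 on U and Ṡ(x) ≠ 0 for every x ∈ U. If the covariant Hessian of S has the form ∇_k∇_l S = α·g_{kl} + β·u_k u_l on U for smooth scalar fields α, β, then u is torse-forming with scalar φ = −α/Ṡ, i.e. ∇_k u_l = (−α/Ṡ)·(g_{kl} + u_k u_l) on U. -/

import Mathlib

noncomputable section
open scoped BigOperators

namespace GRWPaper

/-- Points of the local chart `U ⊆ ℝⁿ`. -/
abbrev Pt (n : ℕ) := Fin n → ℝ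

variable {n : ℕ}

/-- Partial derivative `∂_i f` at `x`. -/
def pd (f : Pt n → ℝ) (i : Fin n) (x : Pt n) : ℝ :=
  fderiv ℝ f x (Pi.single i 1)

/-- `Ṡ = u^m ∂_m S`. -/
def udot (u : Pt n → Fin n → ℝ) (S : Pt n → ℝ) (x : Pt n) : ℝ :=
  ∑ m, u x m * pd S m x

/-- Lowered components `u_k = g_{kj} u^j`. -/
def low (g : Pt n → Matrix (Fin n) (Fin n) ℝ) (u : Pt n → Fin n → ℝ)
    (x : Pt n) (k : Fin n) : ℝ :=
  ∑ j, g x k j * u x j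

/-- Christoffel symbols `Γ^m_{ij} = ½ g^{ml}(∂_i g_{jl} + ∂_j g_{il} − ∂_l g_{ij})`. -/
def Chr (g ginv : Pt n → Matrix (Fin n) (Fin n) ℝ) (m i j : Fin n) (x : Pt n) : ℝ :=
  (1/2) * ∑ l, ginv x m l *
    (pd (fun y => g y j l) i x + pd (fun y => g y i l) j x - pd (fun y => g y i j) l x)

/-- Covariant derivative of a covector field: `∇_k w_l = ∂_k w_l − Γ^m_{kl} w_m`. -/
def covdCo (g ginv : Pt n → Matrix (Fin n) (Fin n) ℝ) (w : Pt n → Fin n → ℝ)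
    (k l : Fin n) (x : Pt n) : ℝ :=
  pd (fun y => w y l) k x - ∑ m, Chr g ginv m k l x * w x m

/-- Covariant Hessian of a scalar: `∇_k∇_l S = ∂_k∂_l S − Γ^m_{kl} ∂_m S`. -/
def hess (g ginv : Pt n → Matrix (Fin n) (Fin n) ℝ) (S : Pt n → ℝ)
    (k l : Fin n) (x : Pt n) : ℝ :=
  pd (fun y => pd S l y) k x - ∑ m, Chr g ginv m k l x * pd S m x

/-- Riemann tensor `R_{jkl}{}^m`, normalized so that
`∇_j∇_k w_l − ∇_k∇_j w_l = R_{jkl}{}^m w_m` for all covector fields `w`. -/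
def Riem (g ginv : Pt n → Matrix (Fin n) (Fin n) ℝ) (j k l m : Fin n) (x : Pt n) : ℝ :=
  pd (fun y => Chr g ginv m j l y) k x - pd (fun y => Chr g ginv m k l y) j x
    + ∑ a, Chr g ginv a j l x * Chr g ginv m k a x
    - ∑ a, Chr g ginv a k l x * Chr g ginv m j a x

/-- Ricci tensor `R_{kl} = R_{jkl}{}^j`. -/
def RicT (g ginv : Pt n → Matrix (Fin n) (Fin n) ℝ) (k l : Fin n) (x : Pt n) : ℝ :=
  ∑ j, Riem g ginv j k l j x

/-- Scalar curvature `R = g^{kl} R_{kl}`. -/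
def ScalC (g ginv : Pt n → Matrix (Fin n) (Fin n) ℝ) (x : Pt n) : ℝ :=
  ∑ k, ∑ l, ginv x k l * RicT g ginv k l x

/-- `R_j{}^m = g^{ma} R_{ja}`. -/
def RicUp (g ginv : Pt n → Matrix (Fin n) (Fin n) ℝ) (j m : Fin n) (x : Pt n) : ℝ :=
  ∑ a, ginv x m a * RicT g ginv j a x

/-- Weyl tensor `C_{jkl}{}^m`. -/
def Weyl (g ginv : Pt n → Matrix (Fin n) (Fin n) ℝ) (j k l m : Fin n) (x : Pt n) : ℝ :=
  Riem g ginv j k l m x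
    + ((if j = m then RicT g ginv k l x else 0) - (if k = m then RicT g ginv j l x else 0)
        + RicUp g ginv j m x * g x k l - RicUp g ginv k m x * g x j l) / ((n : ℝ) - 2)
    - ScalC g ginv x * ((if j = m then g x k l else 0) - (if k = m then g x j l else 0))
        / (((n : ℝ) - 1) * ((n : ℝ) - 2))

/-- Covariant divergence `∇_m C_{jkl}{}^m` of the Weyl tensor. -/
def divWeyl (g ginv : Pt n → Matrix (Fin n) (Fin n) ℝ) (j k l : Fin n) (x : Pt n) : ℝ :=
  ∑ m, (pd (fun y => Weyl g ginv j k l m y) m x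
    - ∑ a, Chr g ginv a m j x * Weyl g ginv a k l m x
    - ∑ a, Chr g ginv a m k x * Weyl g ginv j a l m x
    - ∑ a, Chr g ginv a m l x * Weyl g ginv j k a m x
    + ∑ a, Chr g ginv m m a x * Weyl g ginv j k l a x)

/-- Covariant derivative of a (0,2) tensor: `∇_i T_{kl}`. -/
def covd2T (g ginv : Pt n → Matrix (Fin n) (Fin n) ℝ) (T : Pt n → Fin n → Fin n → ℝ)
    (i k l : Fin n) (x : Pt n) : ℝ :=
  pd (fun y => T y k l) i x - ∑ a, Chr g ginv a i k x * T x a l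
    - ∑ a, Chr g ginv a i l x * T x k a

/-- Covariant derivative of a (0,3) tensor: `∇_i T_{jkl}`. -/
def covd3T (g ginv : Pt n → Matrix (Fin n) (Fin n) ℝ)
    (T : Pt n → Fin n → Fin n → Fin n → ℝ) (i j k l : Fin n) (x : Pt n) : ℝ :=
  pd (fun y => T y j k l) i x - ∑ a, Chr g ginv a i j x * T x a k l
    - ∑ a, Chr g ginv a i k x * T x j a l - ∑ a, Chr g ginv a i l x * T x j k a

/-- Second covariant derivative of a (0,2) tensor: `∇_i∇_j T_{kl}`. -/
def covdcovdT (g ginv : Pt n → Matrix (Fin n) (Fin n) ℝ) (T : Pt n → Fin n → Fin n → ℝ)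
    (i j k l : Fin n) (x : Pt n) : ℝ :=
  covd3T g ginv (fun y a b c => covd2T g ginv T a b c y) i j k l x

/-- Covariant Laplacian of a (0,2) tensor: `g^{ab} ∇_a∇_b T_{kl}`. -/
def lap2T (g ginv : Pt n → Matrix (Fin n) (Fin n) ℝ) (T : Pt n → Fin n → Fin n → ℝ)
    (k l : Fin n) (x : Pt n) : ℝ :=
  ∑ a, ∑ b, ginv x a b * covdcovdT g ginv T a b k l x

/-- All-lowered Riemann tensor `R_{jklm} = R_{jkl}{}^p g_{pm}`. -/
def RiemLow (g ginv : Pt n → Matrix (Fin n) (Fin n) ℝ) (j k l m : Fin n) (x : Pt n) : ℝ :=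
  ∑ p, Riem g ginv j k l p x * g x p m


section Aux
variable {x : Pt n} {i : Fin n}

lemma pd_congr_nhds {f f' : Pt n → ℝ} (h : f =ᶠ[nhds x] f') : pd f i x = pd f' i x := by
  unfold pd; rw [h.fderiv_eq]

lemma pd_const {c : ℝ} : pd (fun _ : Pt n => c) i x = 0 := by
  unfold pd; simp

lemma pd_neg {f : Pt n → ℝ} : pd (fun y => -f y) i x = -pd f i x := by
  unfold pd; rw [fderiv_fun_neg]; simp

lemma pd_mul {f g : Pt n → ℝ} (hf : DifferentiableAt ℝ f x) (hg : DifferentiableAt ℝ g x) :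
    pd (fun y => f y * g y) i x = pd f i x * g x + f x * pd g i x := by
  unfold pd; rw [fderiv_fun_mul hf hg]; simp; ring

lemma pd_sum {ι : Type*} {s : Finset ι} {f : ι → Pt n → ℝ}
    (h : ∀ m ∈ s, DifferentiableAt ℝ (f m) x) :
    pd (fun y => ∑ m ∈ s, f m y) i x = ∑ m ∈ s, pd (f m) i x := by
  unfold pd; rw [fderiv_fun_sum h]; simp

end Aux

/-- Derivation of the torse-forming condition C2 (Section 2 of the paper):
if `∂_k S + u_k Ṡ = 0`, `Ṡ ≠ 0`, and `∇_k∇_l S = α g_{kl} + β u_k u_l`,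
then `u` is torse-forming with scalar `φ = −α/Ṡ`. -/
theorem stmt13
    (n : ℕ) (hn : 3 ≤ n)
    (U : Set (Pt n)) (hU : IsOpen U)
    (g ginv : Pt n → Matrix (Fin n) (Fin n) ℝ)
    (hg_smooth : ∀ i j, ContDiffOn ℝ (⊤ : ℕ∞) (fun x => g x i j) U)
    (hginv_smooth : ∀ i j, ContDiffOn ℝ (⊤ : ℕ∞) (fun x => ginv x i j) U)
    (hg_symm : ∀ x ∈ U, ∀ i j, g x i j = g x j i)
    (hginv : ∀ x ∈ U, g x * ginv x = 1)
    (u : Pt n → Fin n → ℝ) (hu_smooth : ∀ i, ContDiffOn ℝ (⊤ : ℕ∞) (fun x => u x i) U)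
    (hu_unit : ∀ x ∈ U, ∑ i, ∑ j, g x i j * u x i * u x j = -1)
    (S : Pt n → ℝ) (hS_smooth : ContDiffOn ℝ (⊤ : ℕ∞) S U)
    (hC1 : ∀ x ∈ U, ∀ k, pd S k x + low g u x k * udot u S x = 0)
    (hSdot : ∀ x ∈ U, udot u S x ≠ 0)
    (α β : Pt n → ℝ) (hα_smooth : ContDiffOn ℝ (⊤ : ℕ∞) α U) (hβ_smooth : ContDiffOn ℝ (⊤ : ℕ∞) β U)
    (hHess : ∀ x ∈ U, ∀ k l, hess g ginv S k l x
        = α x * g x k l + β x * low g u x k * low g u x l) :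
    ∀ x ∈ U, ∀ k l, covdCo g ginv (low g u) k l x
      = (-(α x) / udot u S x) * (g x k l + low g u x k * low g u x l) := by
  intro x hx k l
  have hxU : U ∈ nhds x := hU.mem_nhds hx
  have hgD : ∀ i j, DifferentiableAt ℝ (fun y => g y i j) x := fun i j =>
    ((hg_smooth i j).contDiffAt hxU).differentiableAt (by simp)
  have huD : ∀ i, DifferentiableAt ℝ (fun y => u y i) x := fun i =>
    ((hu_smooth i).contDiffAt hxU).differentiableAt (by simp)
  have hpdSD : ∀ m, DifferentiableAt ℝ (fun y => pd S m y) x := by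
    intro m
    have h1 : ContDiffAt ℝ (⊤ : ℕ∞) (fun y => fderiv ℝ S y) x :=
      (hS_smooth.contDiffAt hxU).fderiv_right (by simp)
    exact (h1.clm_apply contDiffAt_const).differentiableAt (by simp)
  have hlowD : ∀ j, DifferentiableAt ℝ (fun y => low g u y j) x := by
    intro j; unfold low
    exact DifferentiableAt.fun_sum fun m _ => (hgD j m).fun_mul (huD m)
  have hudotD : DifferentiableAt ℝ (fun y => udot u S y) x := by
    unfold udot
    exact DifferentiableAt.fun_sum fun m _ => (huD m).fun_mul (hpdSD m)
  have hsym : ∀ i j, g x i j = g x j i := hg_symm x hx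
  have hpdlow : ∀ j, pd (fun y => low g u y j) k x
      = ∑ m, (pd (fun y => g y j m) k x * u x m + g x j m * pd (fun y => u y m) k x) := by
    intro j
    have e : (fun y => low g u y j) = fun y => ∑ m, g y j m * u y m := rfl
    rw [e, pd_sum (fun m _ => (hgD j m).fun_mul (huD m))]
    exact Finset.sum_congr rfl fun m _ => pd_mul (hgD j m) (huD m)
  have hN : ∑ i, ∑ j, (pd (fun y => g y i j) k x * u x i * u x j
      + g x i j * pd (fun y => u y i) k x * u x j
      + g x i j * u x i * pd (fun y => u y j) k x) = 0 := by
    have hev2 : (fun y => ∑ i, ∑ j, g y i j * u y i * u y j) =ᶠ[nhds x] fun _ => (-1:ℝ) := by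
      filter_upwards [hxU] with y hy
      exact hu_unit y hy
    have h0 : pd (fun y => ∑ i, ∑ j, g y i j * u y i * u y j) k x = 0 := by
      rw [pd_congr_nhds hev2, pd_const]
    have e1 : pd (fun y => ∑ i, ∑ j, g y i j * u y i * u y j) k x
        = ∑ i, ∑ j, pd (fun y => g y i j * u y i * u y j) k x := by
      rw [pd_sum (fun i _ => DifferentiableAt.fun_sum fun j _ => ((hgD i j).fun_mul (huD i)).fun_mul (huD j))]
      exact Finset.sum_congr rfl fun i _ =>
        pd_sum fun j _ => ((hgD i j).fun_mul (huD i)).fun_mul (huD j)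
    have e2 : ∀ i j : Fin n, pd (fun y => g y i j * u y i * u y j) k x
        = pd (fun y => g y i j) k x * u x i * u x j
          + g x i j * pd (fun y => u y i) k x * u x j
          + g x i j * u x i * pd (fun y => u y j) k x := by
      intro i j
      rw [pd_mul ((hgD i j).fun_mul (huD i)) (huD j), pd_mul (hgD i j) (huD i)]
      ring
    calc ∑ i, ∑ j, (pd (fun y => g y i j) k x * u x i * u x j
          + g x i j * pd (fun y => u y i) k x * u x j
          + g x i j * u x i * pd (fun y => u y j) k x)
        = ∑ i, ∑ j, pd (fun y => g y i j * u y i * u y j) k x :=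
          Finset.sum_congr rfl fun i _ => Finset.sum_congr rfl fun j _ => (e2 i j).symm
      _ = 0 := by rw [← e1, h0]
  have hsymm_term : ∑ i, ∑ j, g x i j * pd (fun y => u y i) k x * u x j
      = ∑ i, ∑ j, g x i j * u x i * pd (fun y => u y j) k x := by
    rw [Finset.sum_comm]
    exact Finset.sum_congr rfl fun i _ => Finset.sum_congr rfl fun j _ => by
      rw [hsym j i]; ring
  have hkey1 : 2 * (∑ i, ∑ j, g x i j * u x i * pd (fun y => u y j) k x)
      = -(∑ i, ∑ j, pd (fun y => g y i j) k x * u x i * u x j) := by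
    have h := hN
    simp only [Finset.sum_add_distrib] at h
    rw [hsymm_term] at h
    linarith
  have hChrLow : ∀ b j : Fin n, ∑ m, Chr g ginv m k b x * g x m j
      = (1/2) * (pd (fun y => g y b j) k x + pd (fun y => g y k j) b x
          - pd (fun y => g y k b) j x) := by
    intro b j
    have hgg : ∀ p, ∑ m, g x m j * ginv x m p = if j = p then (1:ℝ) else 0 := by
      intro p
      have h1 := congrArg (fun M : Matrix (Fin n) (Fin n) ℝ => M j p) (hginv x hx)
      simp only [Matrix.mul_apply, Matrix.one_apply] at h1
      rw [← h1]
      exact Finset.sum_congr rfl fun m _ => by rw [hsym m j]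
    unfold Chr
    calc ∑ m, ((1/2) * ∑ p, ginv x m p *
            (pd (fun y => g y b p) k x + pd (fun y => g y k p) b x
              - pd (fun y => g y k b) p x)) * g x m j
        = ∑ p, (∑ m, g x m j * ginv x m p) * ((1/2) *
            (pd (fun y => g y b p) k x + pd (fun y => g y k p) b x
              - pd (fun y => g y k b) p x)) := by
          simp only [Finset.sum_mul, Finset.mul_sum]
          rw [Finset.sum_comm]
          exact Finset.sum_congr rfl fun p _ => Finset.sum_congr rfl fun m _ => by ring
      _ = (1/2) * (pd (fun y => g y b j) k x + pd (fun y => g y k j) b x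
            - pd (fun y => g y k b) j x) := by
          simp only [hgg, ite_mul, one_mul, zero_mul, Finset.sum_ite_eq, Finset.mem_univ,
            if_true]
  have hdiamond : ∑ j, u x j * covdCo g ginv (low g u) k j x = 0 := by
    have hterm2 : ∀ j : Fin n, ∑ m, Chr g ginv m k j x * low g u x m
        = ∑ p, (1/2) * (pd (fun y => g y j p) k x + pd (fun y => g y k p) j x
            - pd (fun y => g y k j) p x) * u x p := by
      intro j
      have e : ∑ m, Chr g ginv m k j x * low g u x m
          = ∑ p, (∑ m, Chr g ginv m k j x * g x m p) * u x p := by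
        unfold low
        calc ∑ m, Chr g ginv m k j x * ∑ p, g x m p * u x p
            = ∑ m, ∑ p, Chr g ginv m k j x * g x m p * u x p := by
              refine Finset.sum_congr rfl fun m _ => ?_
              rw [Finset.mul_sum]
              exact Finset.sum_congr rfl fun p _ => by ring
          _ = ∑ p, ∑ m, Chr g ginv m k j x * g x m p * u x p := Finset.sum_comm
          _ = ∑ p, (∑ m, Chr g ginv m k j x * g x m p) * u x p := by
              exact Finset.sum_congr rfl fun p _ => (Finset.sum_mul ..).symm
      rw [e]
      exact Finset.sum_congr rfl fun p _ => by rw [hChrLow j p]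
    have hswap : ∑ j, ∑ p, pd (fun y => g y k j) p x * u x j * u x p
        = ∑ j, ∑ p, pd (fun y => g y k p) j x * u x j * u x p := by
      rw [Finset.sum_comm]
      exact Finset.sum_congr rfl fun j _ => Finset.sum_congr rfl fun p _ => by ring
    have hS2 : ∑ j, u x j * ∑ m, Chr g ginv m k j x * low g u x m
        = (1/2) * ∑ j, ∑ p, pd (fun y => g y j p) k x * u x j * u x p := by
      have e : ∑ j, u x j * ∑ m, Chr g ginv m k j x * low g u x m
          = ∑ j, ∑ p, ((1/2) * (pd (fun y => g y j p) k x * u x j * u x p)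
              + (1/2) * (pd (fun y => g y k p) j x * u x j * u x p)
              - (1/2) * (pd (fun y => g y k j) p x * u x j * u x p)) := by
        refine Finset.sum_congr rfl fun j _ => ?_
        rw [hterm2 j, Finset.mul_sum]
        exact Finset.sum_congr rfl fun p _ => by ring
      rw [e]
      simp only [Finset.sum_add_distrib, Finset.sum_sub_distrib, ← Finset.mul_sum]
      rw [hswap]
      ring
    have hS1 : ∑ j, u x j * pd (fun y => low g u y j) k x
        = (∑ j, ∑ p, pd (fun y => g y j p) k x * u x j * u x p)
          + ∑ j, ∑ p, g x j p * u x j * pd (fun y => u y p) k x := by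
      have e : ∑ j, u x j * pd (fun y => low g u y j) k x
          = ∑ j, ∑ p, (pd (fun y => g y j p) k x * u x j * u x p
              + g x j p * u x j * pd (fun y => u y p) k x) := by
        refine Finset.sum_congr rfl fun j _ => ?_
        rw [hpdlow j, Finset.mul_sum]
        exact Finset.sum_congr rfl fun p _ => by ring
      rw [e]
      simp only [Finset.sum_add_distrib]
    have e0 : ∑ j, u x j * covdCo g ginv (low g u) k j x
        = (∑ j, u x j * pd (fun y => low g u y j) k x)
          - ∑ j, u x j * ∑ m, Chr g ginv m k j x * low g u x m := by
      unfold covdCo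
      rw [← Finset.sum_sub_distrib]
      exact Finset.sum_congr rfl fun j _ => by ring
    rw [e0, hS1, hS2]
    linarith [hkey1]
  have hpdSx : ∀ m, pd S m x = -(low g u x m * udot u S x) := fun m => by
    have := hC1 x hx m; linarith
  have hstar : ∀ j, hess g ginv S k j x
      = -(udot u S x) * covdCo g ginv (low g u) k j x
        - low g u x j * pd (fun y => udot u S y) k x := by
    intro j
    have hev : (fun y => pd S j y) =ᶠ[nhds x] fun y => -(low g u y j * udot u S y) := by
      filter_upwards [hxU] with y hy
      have := hC1 y hy j; linarith
    have h1 : pd (fun y => pd S j y) k x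
        = -(pd (fun y => low g u y j) k x * udot u S x
            + low g u x j * pd (fun y => udot u S y) k x) := by
      rw [pd_congr_nhds hev, pd_neg, pd_mul (hlowD j) hudotD]
    have h2 : ∑ m, Chr g ginv m k j x * pd S m x
        = -(udot u S x * ∑ m, Chr g ginv m k j x * low g u x m) := by
      rw [Finset.mul_sum, ← Finset.sum_neg_distrib]
      exact Finset.sum_congr rfl fun m _ => by rw [hpdSx m]; ring
    unfold hess covdCo
    rw [h1, h2]
    ring
  have hulow : ∑ j, u x j * low g u x j = -1 := by
    have e : ∑ j, u x j * low g u x j = ∑ i, ∑ j, g x i j * u x i * u x j := by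
      unfold low
      exact Finset.sum_congr rfl fun i _ => by
        rw [Finset.mul_sum]; exact Finset.sum_congr rfl fun j _ => by ring
    rw [e, hu_unit x hx]
  have hug : ∑ j, u x j * g x k j = low g u x k := by
    unfold low
    exact Finset.sum_congr rfl fun j _ => by ring
  have hC : pd (fun y => udot u S y) k x = (α x - β x) * low g u x k := by
    have hL : ∑ j, u x j * hess g ginv S k j x = pd (fun y => udot u S y) k x := by
      have e : ∑ j, u x j * hess g ginv S k j x
          = -(udot u S x) * (∑ j, u x j * covdCo g ginv (low g u) k j x)
            - (∑ j, u x j * low g u x j) * pd (fun y => udot u S y) k x := by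
        rw [Finset.mul_sum, Finset.sum_mul, ← Finset.sum_sub_distrib]
        exact Finset.sum_congr rfl fun j _ => by rw [hstar j]; ring
      rw [e, hdiamond, hulow]; ring
    have hR : ∑ j, u x j * hess g ginv S k j x = (α x - β x) * low g u x k := by
      have e : ∑ j, u x j * hess g ginv S k j x
          = ∑ j, (α x * (u x j * g x k j) + β x * low g u x k * (u x j * low g u x j)) := by
        refine Finset.sum_congr rfl fun j _ => ?_
        rw [hHess x hx k j]; ring
      rw [e]
      simp only [Finset.sum_add_distrib, ← Finset.mul_sum]
      rw [hug, hulow]; ring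
    rw [← hL, hR]
  have h := hstar l
  rw [hHess x hx k l, hC] at h
  have hS0 := hSdot x hx
  rw [div_mul_eq_mul_div, eq_div_iff hS0]
  linear_combination h
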